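/- Let B be a strict 2-category with a marking M, let c be an object of B, and for every object a fix a marked 1-cell f_a ∈ M(a, c) such that f_c = 𝟙 c. Then c is M-final if and only if there exists an M-contraction γ on B with center c such that γ_a = f_a for every object a. -/

import Mathlib

open CategoryTheory CategoryTheory.Limits

universe w v u

/-- A contraction on a strict 2-category `B` with center `c`. -/
structure Contraction (B : Type u) [Bicategory.{w, v} B] [Bicategory.Strict B] (c : B) where
  obj : ∀ a : B, a ⟶ c
  obj_center : obj c = 𝟙 c
  app : ∀ {a b : B} (f : a ⟶ b), f ≫ obj b ⟶ obj a
  app_id : ∀ a : B, app (𝟙 a) = eqToHom (by simp)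
  app_comp : ∀ {a b b' : B} (f : a ⟶ b) (g : b ⟶ b'),
    app (f ≫ g) = eqToHom (by simp) ≫ Bicategory.whiskerLeft f (app g) ≫ app f
  app_naturality : ∀ {a b : B} {f g : a ⟶ b} (θ : f ⟶ g),
    app f = Bicategory.whiskerRight θ (obj b) ≫ app g
  app_norm : ∀ a : B, app (obj a) = eqToHom (by rw [obj_center]; simp)


/-- A marking on a 2-category: a collection of 1-cells containing all identities. -/
structure Marking (B : Type u) [Bicategory.{w, v} B] where
  marked : ∀ a b : B, Set (a ⟶ b)
  id_mem : ∀ a : B, 𝟙 a ∈ marked a a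


/-- An object `c` is `M`-final if every hom-category `B(a, c)` has a terminal
object, `𝟙 c` is terminal in `B(c, c)`, every object admits a marked 1-cell to
`c`, and precomposition with marked 1-cells preserves terminal objects. -/
structure IsMFinal {B : Type u} [Bicategory.{w, v} B] [Bicategory.Strict B]
    (M : Marking B) (c : B) : Prop where
  hom_has_terminal : ∀ a : B, ∃ t : a ⟶ c, Nonempty (IsTerminal t)
  id_terminal : Nonempty (IsTerminal (𝟙 c))
  exists_marked : ∀ a : B, ∃ f : a ⟶ c, f ∈ M.marked a c
  precomp_terminal : ∀ {a b : B} (f : a ⟶ b), f ∈ M.marked a b →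
    ∀ g : b ⟶ c, Nonempty (IsTerminal g) → Nonempty (IsTerminal (f ≫ g))


/-- A contraction `γ` is an `M`-contraction if each `γ.obj a` is marked and
`γ.app f` is invertible for every marked 1-cell `f`. -/
def Contraction.IsMContraction {B : Type u} [Bicategory.{w, v} B] [Bicategory.Strict B]
    {c : B} (M : Marking B) (γ : Contraction B c) : Prop :=
  (∀ a : B, γ.obj a ∈ M.marked a c) ∧
    (∀ {a b : B} (f : a ⟶ b), f ∈ M.marked a b → IsIso (γ.app f))

/-!
In a contraction `γ`, naturality at a 2-cell `m : g ⟶ γ_a` together with normality and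
`γ_c = 𝟙 c` forces `m` to be `γ_g`, so every `γ_a` is terminal in `B(a, c)`; invertibility of
`γ_g` for marked `g` then transports terminality along precomposition. Conversely, if `c` is
`M`-final, every marked `f : a ⟶ c` is terminal, being `f ≫ 𝟙 c`, so the unique 2-cells into
the chosen `f_a` form a contraction, invertible at marked `g` because `g ≫ f_b` is terminal too.
-/

section

variable {B : Type u} [Bicategory.{w, v} B] [Bicategory.Strict B]

open Bicategory

lemma whiskerRight_eq_of_eq_id {a c : B} {x y : a ⟶ c} (m : x ⟶ y) {k : c ⟶ c}
    (hk : k = 𝟙 c) : m ▷ k = eqToHom (by simp [hk]) ≫ m ≫ eqToHom (by simp [hk]) := by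
  subst hk
  simp [whiskerRight_id, Strict.rightUnitor_eqToIso]

namespace Contraction

variable {c : B}

def isTerminalObj (γ : Contraction B c) (a : B) : IsTerminal (γ.obj a) :=
  IsTerminal.ofUniqueHom
    (fun g => eqToHom (by rw [γ.obj_center]; simp) ≫ γ.app g)
    (fun g m => by
      rw [γ.app_naturality m, γ.app_norm, whiskerRight_eq_of_eq_id m γ.obj_center]
      simp)

def ofIsTerminal (obj : ∀ a : B, a ⟶ c) (obj_center : obj c = 𝟙 c)
    (hobj : ∀ a, IsTerminal (obj a)) : Contraction B c where
  obj := obj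
  obj_center := obj_center
  app {a _} _ := (hobj a).from _
  app_id _ := (hobj _).hom_ext _ _
  app_comp _ _ := (hobj _).hom_ext _ _
  app_naturality _ := (hobj _).hom_ext _ _
  app_norm _ := (hobj _).hom_ext _ _

theorem IsMContraction.isMFinal {M : Marking B} {γ : Contraction B c}
    (hγ : γ.IsMContraction M) : IsMFinal M c where
  hom_has_terminal a := ⟨γ.obj a, ⟨γ.isTerminalObj a⟩⟩
  id_terminal := ⟨(γ.isTerminalObj c).ofIso (eqToIso γ.obj_center)⟩
  exists_marked a := ⟨γ.obj a, hγ.1 a⟩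
  precomp_terminal {a b} g hg _ := fun ⟨ht⟩ =>
    have := hγ.2 g hg
    ⟨(γ.isTerminalObj a).ofIso
      (whiskerLeftIso g (ht.uniqueUpToIso (γ.isTerminalObj b)) ≪≫ asIso (γ.app g)).symm⟩

end Contraction

namespace IsMFinal

variable {M : Marking B} {c : B}

noncomputable def isTerminalOfMem (h : IsMFinal M c) {a : B} {f : a ⟶ c}
    (hf : f ∈ M.marked a c) : IsTerminal f :=
  (h.precomp_terminal f hf (𝟙 c) h.id_terminal).some.ofIso (eqToIso (by simp))

theorem isMContraction_ofIsTerminal (h : IsMFinal M c) (obj : ∀ a : B, a ⟶ c)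
    (obj_center : obj c = 𝟙 c) (hobj : ∀ a, obj a ∈ M.marked a c) :
    (Contraction.ofIsTerminal obj obj_center
      fun a => h.isTerminalOfMem (hobj a)).IsMContraction M :=
  ⟨hobj, fun g hg => isIso_of_isTerminal
    (h.precomp_terminal g hg _ ⟨h.isTerminalOfMem (hobj _)⟩).some
    (h.isTerminalOfMem (hobj _)) _⟩

end IsMFinal

end

/-- Given a choice of marked 1-cells `f a : a ⟶ c` with `f c = 𝟙 c`, the object
`c` is `M`-final if and only if there is an `M`-contraction `γ` with center `c`
such that `γ.obj a = f a` for every `a`. -/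
theorem isMFinal_iff_exists_MContraction {B : Type u} [Bicategory.{w, v} B]
    [Bicategory.Strict B] (M : Marking B) (c : B) (f : ∀ a : B, a ⟶ c)
    (hf : ∀ a : B, f a ∈ M.marked a c) (hfc : f c = 𝟙 c) :
    IsMFinal M c ↔
      ∃ γ : Contraction B c, Contraction.IsMContraction M γ ∧ ∀ a : B, γ.obj a = f a := by
  constructor
  · intro h
    exact ⟨_, h.isMContraction_ofIsTerminal f hfc hf, fun _ => rfl⟩
  · rintro ⟨γ, hγ, -⟩
    exact hγ.isMFinal
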